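/- Let 𝒳 be a separable metrizable space with its Borel σ-algebra and 𝕏 a stochastic process on 𝒳 satisfying condition C4. Then for every p ≥ 0 the extended process 𝕏^p = (X_t)_{t∈𝒯^p} satisfies condition C1. -/

import Mathlib

open MeasureTheory Filter Set Topology

noncomputable section

variable {Ω : Type*} [MeasurableSpace Ω] {𝒳 : Type*} [MeasurableSpace 𝒳]

/-- Average number of times `t ∈ 𝒯 ω`, `1 ≤ t ≤ T`, with `X t ω ∈ A`, divided by `T`. -/
def avgVisit (X : ℕ → Ω → 𝒳) (𝒯 : Ω → Set ℕ) (A : Set 𝒳) (T : ℕ) (ω : Ω) : ℝ :=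
  (T : ℝ)⁻¹ * ∑ t ∈ Finset.Icc 1 T,
    ({s : ℕ | s ∈ 𝒯 ω ∧ X s ω ∈ A}.indicator (fun _ => (1 : ℝ)) t)

/-- Limit submeasure `μ̂` of the extended process `(X_t)_{t ∈ 𝒯}`. -/
def limitSubmeasure (X : ℕ → Ω → 𝒳) (𝒯 : Ω → Set ℕ) (A : Set 𝒳) (ω : Ω) : ℝ :=
  Filter.limsup (fun T => avgVisit X 𝒯 A T ω) Filter.atTop

/-- Condition C1 for the extended process `(X_t)_{t ∈ 𝒯}`. -/
def SatisfiesC1 (P : Measure Ω) (X : ℕ → Ω → 𝒳) (𝒯 : Ω → Set ℕ) : Prop :=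
  ∀ A : ℕ → Set 𝒳, (∀ k, MeasurableSet (A k)) → Antitone A → (⋂ k, A k) = ∅ →
    Filter.Tendsto (fun k => ∫ ω, limitSubmeasure X 𝒯 (A k) ω ∂P) Filter.atTop (nhds 0)

/-- `T_i^k = ⌊2^u (1 + v·2^{-i})⌋` where `k = u·2^i + v`, `0 ≤ v < 2^i`. -/
def timeGrid (i k : ℕ) : ℕ :=
  ⌊(2 : ℝ) ^ (k / 2 ^ i) * (1 + ((k % 2 ^ i : ℕ) : ℝ) / (2 ^ i : ℝ))⌋₊

/-- `𝒯^i`: times of first appearance of the instance within its period at scale `i`. -/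
def scaleTimes (X : ℕ → Ω → 𝒳) (i : ℕ) (ω : Ω) : Set ℕ :=
  {t | 1 ≤ t ∧ ∀ k, timeGrid i k ≤ t → t < timeGrid i (k + 1) →
    ∀ t', timeGrid i k ≤ t' → t' < t → X t' ω ≠ X t ω}

/-- Condition C4. -/
def SatisfiesC4 (P : Measure Ω) (X : ℕ → Ω → 𝒳) : Prop :=
  ∀ A : ℕ → Set 𝒳, (∀ i, MeasurableSet (A i)) → Pairwise (Function.onFun Disjoint A) →
    Filter.Tendsto (fun i => ∫ ω, limitSubmeasure X (scaleTimes X i) (A i) ω ∂P)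
      Filter.atTop (nhds 0)

/-- Supremum over `T ≥ T₀` of the average visit counts. -/
def supAvgVisit (X : ℕ → Ω → 𝒳) (𝒯 : Ω → Set ℕ) (A : Set 𝒳) (T₀ : ℕ) (ω : Ω) : ℝ :=
  ⨆ T : {T : ℕ // T₀ ≤ T}, avgVisit X 𝒯 A T ω

/-- Number of sets `A k` visited by the process up to time `T`. -/
def distinctSetCount (X : ℕ → Ω → 𝒳) (A : ℕ → Set 𝒳) (T : ℕ) (ω : Ω) : ℕ :=
  Set.ncard {k : ℕ | ∃ t, 1 ≤ t ∧ t ≤ T ∧ X t ω ∈ A k}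

/-- Condition C2. -/
def SatisfiesC2 (P : Measure Ω) (X : ℕ → Ω → 𝒳) : Prop :=
  ∀ A : ℕ → Set 𝒳, (∀ k, MeasurableSet (A k)) → Pairwise (Function.onFun Disjoint A) →
    ∀ᵐ ω ∂P, Filter.Tendsto (fun T => (distinctSetCount X A T ω : ℝ) / T)
      Filter.atTop (nhds 0)

/-- Condition C5. -/
def SatisfiesC5 (P : Measure Ω) (X : ℕ → Ω → 𝒳) : Prop :=
  ∃ Ti : ℕ → ℕ, Monotone Ti ∧
    SatisfiesC1 P X (fun ω => ⋃ i, scaleTimes X i ω ∩ {t : ℕ | Ti i ≤ t})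

/-- `N_t(x) = Σ_{1 ≤ s ≤ t} 1[X_s = x]`, the occurrence count. -/
def dupCount (X : ℕ → Ω → 𝒳) (t : ℕ) (x : 𝒳) (ω : Ω) : ℕ :=
  Set.ncard {s : ℕ | 1 ≤ s ∧ s ≤ t ∧ X s ω = x}

/-- Condition C8. -/
def SatisfiesC8 (P : Measure Ω) (X : ℕ → Ω → 𝒳) : Prop :=
  ∃ Ψ : ℕ → ℕ, Monotone Ψ ∧ Filter.Tendsto Ψ Filter.atTop Filter.atTop ∧
    ∀ A : ℕ → Set 𝒳, (∀ i, MeasurableSet (A i)) → Antitone A → (⋂ i, A i) = ∅ →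
      Filter.Tendsto (fun i => ∫ ω, Filter.limsup (fun T : ℕ => (T : ℝ)⁻¹ *
          ∑ t ∈ Finset.Icc 1 T,
            ({s : ℕ | X s ω ∈ A i ∧ dupCount X s (X s ω) ω ≤ Ψ T}.indicator
              (fun _ => (1 : ℝ)) t)) Filter.atTop ∂P)
        Filter.atTop (nhds 0)

/-!
Suppose `A_k ↓ ∅` but `E μ̂_p(A_k) ≥ 2ε` for all `k`. Since `μ̂ ≤ 1`, with probability at least
`ε` the averages along `𝒯^p` over `A_k` exceed `ε` at arbitrarily late times. Any fixed finite
stretch of the path eventually leaves `A_n`, so for `n` large the same happens, with probability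
at least `ε / 2`, for the shell `A_k \ A_n`. Iterating produces disjoint shells `B_n`, each visited
with frequency `ε` at some time `≥ n` with probability at least `ε / 2`. The grouped sets
`C_i = ⋃_j B_⟨i, j⟩` are then visited with frequency `ε` at arbitrarily late times, so
`μ̂_i(C_i) ≥ ε` with probability at least `ε / 2`, because the dyadic grids are nested and hence
`𝒯^p ⊆ 𝒯^i` for `i ≥ p`. Thus `E μ̂_i(C_i) ≥ ε² / 2` for all `i ≥ p`, contradicting C4.
-/

open MeasureTheory Filter Set Topology
open scoped ENNReal

lemma exists_pos_le_of_antitone_of_not_tendsto_zero {a : ℕ → ℝ} (ha : Antitone a)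
    (h0 : ∀ n, 0 ≤ a n) (h : ¬ Tendsto a atTop (𝓝 0)) : ∃ c > 0, ∀ n, c ≤ a n := by
  have hbdd : BddBelow (range a) := ⟨0, by rintro _ ⟨n, rfl⟩; exact h0 n⟩
  refine ⟨⨅ n, a n, (le_ciInf h0).lt_of_ne fun hinf => h ?_, ciInf_le hbdd⟩
  exact hinf ▸ tendsto_atTop_ciInf ha hbdd

lemma Antitone.eventually_notMem_of_iInter_eq_empty {α ι : Type*} [Preorder ι] {A : ι → Set α}
    (hA : Antitone A) (hA0 : ⋂ n, A n = ∅) (x : α) : ∀ᶠ n in atTop, x ∉ A n := by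
  obtain ⟨n, hn⟩ : ∃ n, x ∉ A n := by simpa using eq_empty_iff_forall_notMem.1 hA0 x
  exact (eventually_ge_atTop n).mono fun m hm hx => hn (hA hm hx)

lemma Antitone.pairwise_disjoint_on_sdiff_succ {α : Type*} {C : ℕ → Set α} (hC : Antitone C) :
    Pairwise (Function.onFun Disjoint fun n => C n \ C (n + 1)) :=
  (pairwise_disjoint_on _).2 fun _ _ hmn =>
    disjoint_left.2 fun _ hm hn => hm.2 (hC hmn hn.1)

lemma Pairwise.disjoint_iUnion_pair {α : Type*} {B : ℕ → Set α}
    (hB : Pairwise (Function.onFun Disjoint B)) :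
    Pairwise (Function.onFun Disjoint fun i => ⋃ j, B (Nat.pair i j)) := fun _ _ hii' =>
  disjoint_iUnion_left.2 fun _ => disjoint_iUnion_right.2 fun _ =>
    hB fun h => hii' (Nat.pair_eq_pair.1 h).1

lemma integral_le_add_measureReal_lt {P : Measure Ω} [IsProbabilityMeasure P] {f : Ω → ℝ}
    (hfm : Measurable f) (hf : Integrable f P) (hf1 : ∀ ω, f ω ≤ 1) {ε : ℝ} (hε : 0 ≤ ε) :
    ∫ ω, f ω ∂P ≤ ε + P.real {ω | ε < f ω} := by
  have hs : MeasurableSet {ω | ε < f ω} := measurableSet_lt measurable_const hfm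
  have hind : Integrable ({ω | ε < f ω}.indicator (1 : Ω → ℝ)) P :=
    (integrable_const 1).indicator hs
  calc ∫ ω, f ω ∂P ≤ ∫ ω, (ε + {ω | ε < f ω}.indicator 1 ω) ∂P := by
        refine integral_mono hf ((integrable_const ε).add hind) fun ω => ?_
        by_cases hω : ε < f ω
        · simp only [indicator_of_mem (show ω ∈ {ω | ε < f ω} from hω), Pi.one_apply]
          linarith [hf1 ω]
        · simp [not_lt.1 hω]
    _ = ε + P.real {ω | ε < f ω} := by
        rw [integral_add (integrable_const ε) hind, integral_const, integral_indicator_one hs]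
        simp

lemma timeGrid_eq (i k : ℕ) :
    timeGrid i k = (2 ^ i + k % 2 ^ i) * 2 ^ (k / 2 ^ i) / 2 ^ i := by
  rw [timeGrid, ← Nat.floor_div_eq_div (K := ℝ) ((2 ^ i + k % 2 ^ i) * 2 ^ (k / 2 ^ i))]
  congr 1
  push_cast
  field_simp

lemma monotone_timeGrid (i : ℕ) : Monotone (timeGrid i) := by
  suffices Monotone fun k => (2 ^ i + k % 2 ^ i) * 2 ^ (k / 2 ^ i) from
    fun k l hkl => by simpa only [timeGrid_eq] using Nat.div_le_div_right (this hkl)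
  refine monotone_nat_of_le_succ fun k => ?_
  set N := 2 ^ i
  have hN : 0 < N := by positivity
  have hk := Nat.mod_add_div k N
  have hmod := Nat.mod_lt k hN
  rcases lt_or_ge (k % N + 1) N with h | h
  · obtain ⟨hq, hr⟩ : (k + 1) / N = k / N ∧ (k + 1) % N = k % N + 1 :=
      (Nat.div_mod_unique hN).2 ⟨by omega, h⟩
    rw [hq, hr]
    gcongr
    omega
  · obtain ⟨hq, hr⟩ : (k + 1) / N = k / N + 1 ∧ (k + 1) % N = 0 :=
      (Nat.div_mod_unique hN).2 ⟨by rw [mul_add]; omega, hN⟩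
    rw [hq, hr, pow_succ]
    nlinarith [pow_pos (zero_lt_two' ℕ) (k / N)]

lemma timeGrid_add_mul_two_pow (p d j : ℕ) : timeGrid (p + d) (j * 2 ^ d) = timeGrid p j := by
  have hd : 0 < 2 ^ d := by positivity
  have hdiv : j * 2 ^ d / 2 ^ (p + d) = j / 2 ^ p := by rw [pow_add, Nat.mul_div_mul_right _ _ hd]
  have hmod : j * 2 ^ d % 2 ^ (p + d) = j % 2 ^ p * 2 ^ d := by rw [pow_add, Nat.mul_mod_mul_right]
  rw [timeGrid_eq, timeGrid_eq, hdiv, hmod, pow_add,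
    show (2 ^ p * 2 ^ d + j % 2 ^ p * 2 ^ d) * 2 ^ (j / 2 ^ p)
      = (2 ^ p + j % 2 ^ p) * 2 ^ (j / 2 ^ p) * 2 ^ d by ring, Nat.mul_div_mul_right _ _ hd]

lemma exists_timeGrid_period_superset {p i : ℕ} (hpi : p ≤ i) (k : ℕ) :
    ∃ j, timeGrid p j ≤ timeGrid i k ∧ timeGrid i (k + 1) ≤ timeGrid p (j + 1) := by
  obtain ⟨d, rfl⟩ := Nat.exists_eq_add_of_le hpi
  refine ⟨k / 2 ^ d, ?_, ?_⟩
  · rw [← timeGrid_add_mul_two_pow p d]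
    exact monotone_timeGrid _ (Nat.div_mul_le_self k _)
  · rw [← timeGrid_add_mul_two_pow p d, add_mul, one_mul]
    exact monotone_timeGrid _ (Nat.lt_div_mul_add (by positivity))

lemma scaleTimes_subset_of_le {Ω 𝒳 : Type*} (X : ℕ → Ω → 𝒳) {p i : ℕ} (hpi : p ≤ i) (ω : Ω) :
    scaleTimes X p ω ⊆ scaleTimes X i ω := by
  rintro t ⟨ht, hfirst⟩
  refine ⟨ht, fun k hk hk' t' ht' ht't => ?_⟩
  obtain ⟨j, hj, hj'⟩ := exists_timeGrid_period_superset hpi k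
  exact hfirst j (hj.trans hk) (hk'.trans_le hj') t' (hj.trans ht') ht't

lemma measurableSet_mem_scaleTimes [MeasurableEq 𝒳] {X : ℕ → Ω → 𝒳}
    (hX : ∀ t, Measurable (X t)) (i t : ℕ) : MeasurableSet {ω | t ∈ scaleTimes X i ω} := by
  simp only [scaleTimes, mem_ofPred_eq, measurableSet_setOfPred]
  fun_prop

section Visits

variable {Ω 𝒳 : Type*} {X : ℕ → Ω → 𝒳} {𝒯 : Ω → Set ℕ} {A B : Set 𝒳} {T : ℕ} {ω : Ω}

lemma avgVisit_nonneg : 0 ≤ avgVisit X 𝒯 A T ω :=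
  mul_nonneg (by positivity)
    (Finset.sum_nonneg fun _ _ => indicator_nonneg (fun _ _ => zero_le_one) _)

lemma avgVisit_le_one : avgVisit X 𝒯 A T ω ≤ 1 := by
  refine inv_mul_le_one_of_le₀ ((Finset.sum_le_card_nsmul _ _ 1 fun t _ => ?_).trans (by simp))
    (Nat.cast_nonneg T)
  exact indicator_le_self' (fun _ _ => zero_le_one) t

lemma avgVisit_le_avgVisit {𝒯' : Ω → Set ℕ} (h𝒯 : 𝒯 ω ⊆ 𝒯' ω)
    (hAB : ∀ t ∈ Finset.Icc 1 T, X t ω ∈ A → X t ω ∈ B) :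
    avgVisit X 𝒯 A T ω ≤ avgVisit X 𝒯' B T ω := by
  unfold avgVisit
  refine mul_le_mul_of_nonneg_left (Finset.sum_le_sum fun t ht => ?_) (by positivity)
  refine indicator_apply_le' (fun hs => ?_) fun _ =>
    indicator_nonneg (fun _ _ => zero_le_one (α := ℝ)) _
  rw [indicator_of_mem (show t ∈ {s | s ∈ 𝒯' ω ∧ X s ω ∈ B} from ⟨h𝒯 hs.1, hAB t ht hs.2⟩)]

lemma isBoundedUnder_avgVisit : IsBoundedUnder (· ≤ ·) atTop fun T => avgVisit X 𝒯 A T ω :=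
  isBoundedUnder_of ⟨1, fun _ => avgVisit_le_one⟩

lemma isCoboundedUnder_avgVisit : IsCoboundedUnder (· ≤ ·) atTop fun T => avgVisit X 𝒯 A T ω :=
  isCoboundedUnder_le_of_le atTop fun _ => avgVisit_nonneg

lemma limitSubmeasure_nonneg : 0 ≤ limitSubmeasure X 𝒯 A ω :=
  le_limsup_of_frequently_le (Frequently.of_forall fun _ => avgVisit_nonneg)
    isBoundedUnder_avgVisit

lemma limitSubmeasure_le_one : limitSubmeasure X 𝒯 A ω ≤ 1 :=
  limsup_le_of_le isCoboundedUnder_avgVisit (Eventually.of_forall fun _ => avgVisit_le_one)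

lemma limitSubmeasure_mono (hAB : A ⊆ B) : limitSubmeasure X 𝒯 A ω ≤ limitSubmeasure X 𝒯 B ω :=
  limsup_le_limsup
    (Eventually.of_forall fun _ => avgVisit_le_avgVisit subset_rfl fun _ _ h => hAB h)
    isCoboundedUnder_avgVisit isBoundedUnder_avgVisit

lemma frequently_lt_avgVisit {r : ℝ} (hr : r < limitSubmeasure X 𝒯 A ω) :
    ∃ᶠ T in atTop, r < avgVisit X 𝒯 A T ω :=
  frequently_lt_of_lt_limsup isCoboundedUnder_avgVisit hr

lemma le_limitSubmeasure_of_frequently {r : ℝ} (hr : ∃ᶠ T in atTop, r ≤ avgVisit X 𝒯 A T ω) :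
    r ≤ limitSubmeasure X 𝒯 A ω :=
  le_limsup_of_frequently_le hr isBoundedUnder_avgVisit

end Visits

lemma exists_lt_measure_visit_sdiff {𝒳 : Type*} {P : Measure Ω} {X : ℕ → Ω → 𝒳} {𝒯 : Ω → Set ℕ}
    {A : ℕ → Set 𝒳} (hAnt : Antitone A) (hA0 : ⋂ n, A n = ∅) {c : ℝ≥0∞} {ε : ℝ} {k m : ℕ}
    (hc : c < P {ω | ∃ T ≥ m, ε ≤ avgVisit X 𝒯 (A k) T ω}) :
    ∃ n > k, c < P {ω | ∃ T ≥ m, ε ≤ avgVisit X 𝒯 (A k \ A n) T ω} := by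
  set E : ℕ → Set Ω := fun n => {ω | ∃ T ≥ m, ε ≤ avgVisit X 𝒯 (A k \ A n) T ω}
  have hE : Monotone E := fun n n' hn ω ⟨T, hT, hεT⟩ =>
    ⟨T, hT, hεT.trans (avgVisit_le_avgVisit subset_rfl fun _ _ hx =>
      ⟨hx.1, fun hx' => hx.2 (hAnt hn hx')⟩)⟩
  have hUnion : ⋃ n, E n = {ω | ∃ T ≥ m, ε ≤ avgVisit X 𝒯 (A k) T ω} := by
    ext ω
    simp only [E, mem_iUnion, mem_ofPred_eq]
    constructor
    · rintro ⟨n, T, hT, hεT⟩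
      exact ⟨T, hT, hεT.trans (avgVisit_le_avgVisit subset_rfl fun _ _ hx => hx.1)⟩
    · rintro ⟨T, hT, hεT⟩
      obtain ⟨n, hn⟩ := ((eventually_all_finset (Finset.Icc 1 T)).2 fun t _ =>
        hAnt.eventually_notMem_of_iInter_eq_empty hA0 (X t ω)).exists
      exact ⟨n, T, hT, hεT.trans (avgVisit_le_avgVisit subset_rfl fun t ht hx => ⟨hx, hn t ht⟩)⟩
  have hlim := tendsto_measure_iUnion_atTop (μ := P) hE
  rw [hUnion] at hlim
  obtain ⟨n, hcn, hkn⟩ := ((hlim.eventually_const_lt hc).and (eventually_gt_atTop k)).exists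
  exact ⟨n, hkn, hcn⟩

section Measurability

variable {P : Measure Ω} {X : ℕ → Ω → 𝒳} {𝒯 : Ω → Set ℕ}

lemma measurable_avgVisit (h𝒯 : ∀ t, MeasurableSet {ω | t ∈ 𝒯 ω}) (hX : ∀ t, Measurable (X t))
    {A : Set 𝒳} (hA : MeasurableSet A) (T : ℕ) : Measurable (avgVisit X 𝒯 A T) := by
  unfold avgVisit
  refine Measurable.const_mul (Finset.measurable_sum _ fun t _ => ?_) _
  classical
  simp only [indicator_apply, mem_ofPred_eq]
  exact Measurable.ite ((h𝒯 t).inter (hX t hA)) measurable_const measurable_const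

lemma measurable_limitSubmeasure (h𝒯 : ∀ t, MeasurableSet {ω | t ∈ 𝒯 ω})
    (hX : ∀ t, Measurable (X t)) {A : Set 𝒳} (hA : MeasurableSet A) :
    Measurable (limitSubmeasure X 𝒯 A) :=
  Measurable.limsup fun T => measurable_avgVisit h𝒯 hX hA T

lemma integrable_limitSubmeasure [IsFiniteMeasure P] {A : Set 𝒳}
    (h𝒯 : ∀ t, MeasurableSet {ω | t ∈ 𝒯 ω}) (hX : ∀ t, Measurable (X t)) (hA : MeasurableSet A) :
    Integrable (limitSubmeasure X 𝒯 A) P :=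
  Integrable.of_bound (measurable_limitSubmeasure h𝒯 hX hA).aestronglyMeasurable 1
    (ae_of_all _ fun _ => by
      rw [Real.norm_of_nonneg limitSubmeasure_nonneg]; exact limitSubmeasure_le_one)

lemma mul_le_integral_limitSubmeasure [IsFiniteMeasure P] (h𝒯 : ∀ t, MeasurableSet {ω | t ∈ 𝒯 ω})
    (hX : ∀ t, Measurable (X t)) {C : Set 𝒳} (hC : MeasurableSet C) {ε δ : ℝ} (hε : 0 ≤ ε)
    (hvisit : ∀ m, ENNReal.ofReal δ ≤ P {ω | ∃ T ≥ m, ε ≤ avgVisit X 𝒯 C T ω}) :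
    ε * δ ≤ ∫ ω, limitSubmeasure X 𝒯 C ω ∂P := by
  set V : ℕ → Set Ω := fun m => {ω | ∃ T ≥ m, ε ≤ avgVisit X 𝒯 C T ω}
  have hV : Antitone V := fun m m' hm ω ⟨T, hT, hεT⟩ => ⟨T, hm.trans hT, hεT⟩
  have hVm (m : ℕ) : MeasurableSet (V m) := by
    simp only [V, measurableSet_setOfPred]
    exact Measurable.exists fun T => measurable_const.and
      (measurableSet_le measurable_const (measurable_avgVisit h𝒯 hX hC T)).mem
  have hlim : ENNReal.ofReal δ ≤ P (⋂ m, V m) :=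
    ge_of_tendsto (tendsto_measure_iInter_atTop (fun m => (hVm m).nullMeasurableSet) hV
      ⟨0, measure_ne_top _ _⟩) (Eventually.of_forall hvisit)
  have hsub : ⋂ m, V m ⊆ {ω | ε ≤ limitSubmeasure X 𝒯 C ω} := fun ω hω =>
    le_limitSubmeasure_of_frequently (frequently_atTop.2 fun m => mem_iInter.1 hω m)
  calc ε * δ ≤ ε * P.real {ω | ε ≤ limitSubmeasure X 𝒯 C ω} := by
        gcongr
        exact (ENNReal.ofReal_le_iff_le_toReal (measure_ne_top _ _)).1
          (hlim.trans (measure_mono hsub))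
    _ ≤ ∫ ω, limitSubmeasure X 𝒯 C ω ∂P :=
        mul_meas_ge_le_integral_of_nonneg (ae_of_all _ fun _ => limitSubmeasure_nonneg)
          (integrable_limitSubmeasure h𝒯 hX hC) ε

lemma exists_pairwise_disjoint_visited [IsProbabilityMeasure P]
    (h𝒯 : ∀ t, MeasurableSet {ω | t ∈ 𝒯 ω}) (hX : ∀ t, Measurable (X t)) {A : ℕ → Set 𝒳}
    (hA : ∀ k, MeasurableSet (A k)) (hAnt : Antitone A) (hA0 : ⋂ k, A k = ∅)
    (hC1 : ¬ Tendsto (fun k => ∫ ω, limitSubmeasure X 𝒯 (A k) ω ∂P) atTop (𝓝 0)) :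
    ∃ ε > 0, ∃ δ > 0, ∃ B : ℕ → Set 𝒳, (∀ n, MeasurableSet (B n)) ∧
      Pairwise (Function.onFun Disjoint B) ∧
      ∀ n, ENNReal.ofReal δ ≤ P {ω | ∃ T ≥ n, ε ≤ avgVisit X 𝒯 (B n) T ω} := by
  have hint (k : ℕ) := integrable_limitSubmeasure (P := P) h𝒯 hX (hA k)
  obtain ⟨c, hc, hcA⟩ := exists_pos_le_of_antitone_of_not_tendsto_zero
    (fun k l hkl => integral_mono (hint l) (hint k) fun ω => limitSubmeasure_mono (hAnt hkl))
    (fun k => integral_nonneg fun ω => limitSubmeasure_nonneg) hC1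
  obtain ⟨ε, hε, rfl⟩ : ∃ ε > 0, c = 2 * ε := ⟨c / 2, half_pos hc, by ring⟩
  have hvisit (k m : ℕ) :
      ENNReal.ofReal ε ≤ P {ω | ∃ T ≥ m, ε ≤ avgVisit X 𝒯 (A k) T ω} := by
    have hmarkov := integral_le_add_measureReal_lt (measurable_limitSubmeasure h𝒯 hX (hA k))
      (hint k) (fun ω => limitSubmeasure_le_one) hε.le
    have hbig : ε ≤ P.real {ω | ε < limitSubmeasure X 𝒯 (A k) ω} := by linarith [hcA k]
    refine (ENNReal.ofReal_le_of_le_toReal hbig).trans (measure_mono fun ω hω => ?_)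
    obtain ⟨T, hεT, hT⟩ :=
      ((frequently_lt_avgVisit hω).and_eventually (eventually_ge_atTop m)).exists
    exact ⟨T, hT, hεT.le⟩
  have hstep (k : ℕ) : ∃ n > k,
      ENNReal.ofReal (ε / 2) < P {ω | ∃ T ≥ k, ε ≤ avgVisit X 𝒯 (A k \ A n) T ω} :=
    exists_lt_measure_visit_sdiff hAnt hA0
      (((ENNReal.ofReal_lt_ofReal_iff (by positivity)).2 (by linarith)).trans_le (hvisit k k))
  choose next hnext_gt hnext using hstep
  set kk : ℕ → ℕ := fun n => next^[n] 0
  have hkk_succ (n : ℕ) : kk (n + 1) = next (kk n) := Function.iterate_succ_apply' next n 0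
  have hkk : StrictMono kk := strictMono_nat_of_lt_succ fun n => hkk_succ n ▸ hnext_gt _
  refine ⟨ε, hε, ε / 2, half_pos hε, fun n => A (kk n) \ A (kk (n + 1)),
    fun n => (hA _).diff (hA _), (hAnt.comp_monotone hkk.monotone).pairwise_disjoint_on_sdiff_succ,
    fun n => (hnext (kk n)).le.trans (measure_mono ?_)⟩
  rintro ω ⟨T, hT, hεT⟩
  exact ⟨T, (hkk.id_le n).trans hT, by simpa only [hkk_succ] using hεT⟩

end Measurability

/-- if 𝕏 satisfies C4 then each extended process 𝕏^p = (X_t)_{t∈𝒯^p}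
satisfies C1. -/
theorem stmt11 [TopologicalSpace 𝒳] [TopologicalSpace.SeparableSpace 𝒳]
    [TopologicalSpace.MetrizableSpace 𝒳] [BorelSpace 𝒳]
    (P : Measure Ω) [IsProbabilityMeasure P]
    (X : ℕ → Ω → 𝒳) (hX : ∀ t, Measurable (X t))
    (hC4 : SatisfiesC4 P X) :
    ∀ p : ℕ, SatisfiesC1 P X (scaleTimes X p) := by
  intro p A hA hAnt hA0
  by_contra hC1
  have : MeasurableEq 𝒳 := by
    let := TopologicalSpace.pseudoMetrizableSpacePseudoMetric 𝒳
    have := UniformSpace.secondCountable_of_separable 𝒳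
    infer_instance
  obtain ⟨ε, hε, δ, hδ, B, hB, hBdisj, hBvisit⟩ :=
    exists_pairwise_disjoint_visited (measurableSet_mem_scaleTimes hX p) hX hA hAnt hA0 hC1
  set C : ℕ → Set 𝒳 := fun i => ⋃ j, B (Nat.pair i j)
  have hC (i : ℕ) : MeasurableSet (C i) := MeasurableSet.iUnion fun j => hB _
  -- for `i ≥ p`, the visits to `B ⟨i, j⟩` after time `⟨i, j⟩ ≥ j` are visits to `C i` along `𝒯^i`
  have hC_ge : ∀ i ≥ p, ε * δ ≤ ∫ ω, limitSubmeasure X (scaleTimes X i) (C i) ω ∂P := by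
    intro i hi
    refine mul_le_integral_limitSubmeasure (measurableSet_mem_scaleTimes hX i) hX (hC i) hε.le
      fun m => (hBvisit (Nat.pair i m)).trans (measure_mono ?_)
    rintro ω ⟨T, hT, hεT⟩
    exact ⟨T, (Nat.right_le_pair i m).trans hT, hεT.trans <| avgVisit_le_avgVisit
      (scaleTimes_subset_of_le X hi ω) fun _ _ hx => mem_iUnion_of_mem m hx⟩
  have hlim := hC4 C hC hBdisj.disjoint_iUnion_pair
  exact (mul_pos hε hδ).not_ge (ge_of_tendsto hlim (eventually_atTop.2 ⟨p, hC_ge⟩))
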